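/- arXiv:1602.01124 — 4 statements merged into one kernel-verified Lean document; each statement's English description precedes it below -/
import Mathlib

section
/- Let g ∈ ℝⁿ (n ≥ 1) and L > 0. Then the infimum over h ∈ ℝⁿ of ⟨g, h⟩ + (L/2)‖h‖₁² equals −‖g‖_∞²/(2L), and it is attained at h = −(g_{i*}/L)·e_{i*}, where i* is any index with |g_{i*}| = ‖g‖_∞. -/
/-- For `g ∈ ℝⁿ` (`n ≥ 1`) and `L > 0`, the infimum over `h ∈ ℝⁿ` of
`⟨g,h⟩ + (L/2)‖h‖₁²` equals `-‖g‖_∞²/(2L)`, and it is attained at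
`h = -(g_{i*}/L)•e_{i*}` where `|g_{i*}| = ‖g‖_∞`. -/
theorem stmt2 {n : ℕ} (hn : 1 ≤ n) (g : Fin n → ℝ) (L : ℝ) (hL : 0 < L)
    (istar : Fin n) (histar : ∀ j, |g j| ≤ |g istar|) :
    IsLeast
      (Set.range fun h : Fin n → ℝ =>
        (∑ i, g i * h i) + L / 2 * (∑ i, |h i|) ^ 2)
      (-(|g istar|) ^ 2 / (2 * L)) ∧
    ((∑ i, g i * ((-(g istar / L)) • (Pi.single istar 1 : Fin n → ℝ)) i) +
        L / 2 * (∑ i, |((-(g istar / L)) • (Pi.single istar 1 : Fin n → ℝ)) i|) ^ 2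
      = -(|g istar|) ^ 2 / (2 * L)) := by
  have hval :
      (∑ i, g i * ((-(g istar / L)) • (Pi.single istar 1 : Fin n → ℝ)) i) +
        L / 2 * (∑ i, |((-(g istar / L)) • (Pi.single istar 1 : Fin n → ℝ)) i|) ^ 2
      = -(|g istar|) ^ 2 / (2 * L) := by
    have h1 : (∑ i, g i * ((-(g istar / L)) • (Pi.single istar 1 : Fin n → ℝ)) i)
        = g istar * (-(g istar / L)) := by
      simp [Pi.single_apply, mul_ite, Finset.sum_ite_eq']
    have h2 : (∑ i, |((-(g istar / L)) • (Pi.single istar 1 : Fin n → ℝ)) i|)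
        = |g istar| / L := by
      simp only [Pi.smul_apply, Pi.single_apply, smul_eq_mul, mul_ite, mul_one, mul_zero,
        apply_ite abs, abs_zero, Finset.sum_ite_eq', Finset.mem_univ, if_true]
      rw [abs_neg, abs_div, abs_of_pos hL]
    rw [h1, h2]
    have hg : |g istar| ^ 2 = g istar ^ 2 := sq_abs _
    field_simp
    nlinarith [sq_abs (g istar)]
  refine ⟨⟨⟨_, hval⟩, ?_⟩, hval⟩
  rintro x ⟨h, rfl⟩
  set s := ∑ i, |h i| with hs
  have hs0 : 0 ≤ s := Finset.sum_nonneg fun i _ => abs_nonneg _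
  have hlb : -(|g istar| * s) ≤ ∑ i, g i * h i := by
    have heq : -(|g istar| * s) = ∑ i, -(|g istar| * |h i|) := by
      rw [hs, Finset.mul_sum]
      simp
    rw [heq]
    apply Finset.sum_le_sum
    intro i _
    have h1 : |g i * h i| ≤ |g istar| * |h i| := by
      rw [abs_mul]
      exact mul_le_mul_of_nonneg_right (histar i) (abs_nonneg _)
    have h2 := neg_abs_le (g i * h i)
    linarith
  have : -(|g istar|) ^ 2 / (2 * L) ≤ -(|g istar| * s) + L / 2 * s ^ 2 := by
    rw [div_le_iff₀ (by positivity)]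
    nlinarith [sq_nonneg (L * s - |g istar|)]
  linarith
end

section
/- Let A be a symmetric n×n real matrix, b ∈ ℝⁿ, f(x) = (1/2)⟨Ax, x⟩ − ⟨b, x⟩, and let L > 0 satisfy L ≥ max_{i,j} |A_{ij}|. For x ∈ ℝⁿ, let i* be an index maximizing |(Ax − b)_j| over j, and set x⁺ = x − (1/L)(Ax − b)_{i*}·e_{i*}. Then f(x⁺) ≤ f(x) − ‖Ax − b‖_∞²/(2L). -/
/-!
Along a direction `d` the quadratic `f` is exactly its second-order Taylor polynomial,
`f (x - t • d) = f x - t ⟪∇f x, d⟫ + t²/2 ⟪A d, d⟫`. For `d = eᵢ` the curvature term is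
`t²/2 · Aᵢᵢ ≤ t²/2 · L`, and the step `t = (∇f x)ᵢ / L` minimises the resulting upper bound,
decreasing `f` by `(∇f x)ᵢ² / (2L)`.
-/

open Matrix

section QuadraticObjective

variable {ι 𝕜 : Type*} [Fintype ι]

def quadraticObjective [Field 𝕜] (A : Matrix ι ι 𝕜) (b x : ι → 𝕜) : 𝕜 :=
  1 / 2 * (A *ᵥ x ⬝ᵥ x) - b ⬝ᵥ x

theorem Matrix.IsSymm.mulVec_dotProduct_comm [CommSemiring 𝕜] {A : Matrix ι ι 𝕜}
    (hA : A.IsSymm) (x y : ι → 𝕜) : A *ᵥ x ⬝ᵥ y = A *ᵥ y ⬝ᵥ x := by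
  rw [dotProduct_comm, dotProduct_mulVec, ← mulVec_transpose, hA.eq]

theorem quadraticObjective_sub_smul [Field 𝕜] [NeZero (2 : 𝕜)] {A : Matrix ι ι 𝕜}
    (hA : A.IsSymm) (b x d : ι → 𝕜) (t : 𝕜) :
    quadraticObjective A b (x - t • d) =
      quadraticObjective A b x - t * ((A *ᵥ x - b) ⬝ᵥ d) + t ^ 2 / 2 * (A *ᵥ d ⬝ᵥ d) := by
  have hsymm := hA.mulVec_dotProduct_comm d x
  simp only [quadraticObjective, mulVec_sub, mulVec_smul, sub_dotProduct, dotProduct_sub,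
    smul_dotProduct, dotProduct_smul, smul_eq_mul] at hsymm ⊢
  rw [hsymm]
  field_simp
  ring

theorem quadraticObjective_sub_smul_single [Field 𝕜] [NeZero (2 : 𝕜)] [DecidableEq ι]
    {A : Matrix ι ι 𝕜} (hA : A.IsSymm) (b x : ι → 𝕜) (i : ι) (t : 𝕜) :
    quadraticObjective A b (x - t • Pi.single i 1) =
      quadraticObjective A b x - t * (A *ᵥ x - b) i + t ^ 2 / 2 * A i i := by
  rw [quadraticObjective_sub_smul hA, dotProduct_single_one, mulVec_single_one,
    dotProduct_single_one, col_apply]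

theorem quadraticObjective_coordinateStep_le [Field 𝕜] [LinearOrder 𝕜] [IsStrictOrderedRing 𝕜]
    [DecidableEq ι] {A : Matrix ι ι 𝕜} (hA : A.IsSymm) (b x : ι → 𝕜) (i : ι) {L : 𝕜}
    (hL : A i i ≤ L) :
    quadraticObjective A b (x - ((A *ᵥ x - b) i / L) • Pi.single i 1) ≤
      quadraticObjective A b x - (A *ᵥ x - b) i ^ 2 / (2 * L) := by
  set g := (A *ᵥ x - b) i
  rw [quadraticObjective_sub_smul_single hA]
  rcases eq_or_ne L 0 with rfl | hL0
  · -- with `x / 0 = 0` the step is zero and so is the claimed decrease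
    simp
  · have hcurv : (g / L) ^ 2 / 2 * A i i ≤ (g / L) ^ 2 / 2 * L :=
      mul_le_mul_of_nonneg_left hL (by positivity)
    calc _ ≤ quadraticObjective A b x - g / L * g + (g / L) ^ 2 / 2 * L := by linarith
      _ = _ := by field_simp; ring

end QuadraticObjective

theorem stmt3_general {n : ℕ} (A : Matrix (Fin n) (Fin n) ℝ) (hA : A.IsSymm)
    (b : Fin n → ℝ) (L : ℝ) (hLmax : ∀ i j, |A i j| ≤ L)
    (f : (Fin n → ℝ) → ℝ)
    (hf : ∀ x, f x = (1 / 2) * (∑ i, A.mulVec x i * x i) - ∑ i, b i * x i)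
    (x : Fin n → ℝ) (istar : Fin n) :
    f (x - ((A.mulVec x istar - b istar) / L) • (Pi.single istar 1 : Fin n → ℝ))
      ≤ f x - (|A.mulVec x istar - b istar|) ^ 2 / (2 * L) := by
  have hf_eq : f = quadraticObjective A b := funext hf
  rw [hf_eq, sq_abs]
  exact quadraticObjective_coordinateStep_le hA b x istar (le_of_abs_le (hLmax istar istar))

/-- One step of the gradient method in the `ℓ₁`-norm: with `f x = (1/2)⟨Ax,x⟩ - ⟨b,x⟩`,
`A` symmetric, `L ≥ max_{i,j}|A_{ij}|`, `i*` a coordinate maximizing `|(Ax-b)_j|`, and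
`x⁺ = x - (1/L)(Ax-b)_{i*}•e_{i*}`, one has `f(x⁺) ≤ f(x) - ‖Ax-b‖_∞²/(2L)`. -/
theorem stmt3 {n : ℕ} (A : Matrix (Fin n) (Fin n) ℝ) (hA : A.IsSymm)
    (b : Fin n → ℝ) (L : ℝ) (hL : 0 < L) (hLmax : ∀ i j, |A i j| ≤ L)
    (f : (Fin n → ℝ) → ℝ)
    (hf : ∀ x, f x = (1 / 2) * (∑ i, A.mulVec x i * x i) - ∑ i, b i * x i)
    (x : Fin n → ℝ) (istar : Fin n)
    (histar : ∀ j, |A.mulVec x j - b j| ≤ |A.mulVec x istar - b istar|) :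
    f (x - ((A.mulVec x istar - b istar) / L) • (Pi.single istar 1 : Fin n → ℝ))
      ≤ f x - (|A.mulVec x istar - b istar|) ^ 2 / (2 * L) :=
  stmt3_general A hA b L hLmax f hf x istar
end

section
/- Let A be a symmetric positive semidefinite n×n real matrix (n ≥ 2), b ∈ ℝⁿ, f(x) = (1/2)⟨Ax, x⟩ − ⟨b, x⟩, R > 0, and S̄_n(R) = {x ∈ ℝⁿ : xᵢ ≥ 0 for all i, Σᵢ xᵢ ≤ R}. Let x* minimize f over S̄_n(R), and consider Frank–Wolfe iterates on S̄_n(R): x¹ ∈ S̄_n(R), y^k ∈ S̄_n(R) with ⟨∇f(x^k), y^k⟩ ≤ ⟨∇f(x^k), z⟩ for all z ∈ S̄_n(R), and x^{k+1} = (1 − γ_k) x^k + γ_k y^k, γ_k = 2/(k+1). Then for every N ≥ 2, f(x^N) − f(x*) ≤ 8 max_{i,j} |A_{ij}| R² / (N + 1). -/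
/-! By the choice of `y k` and convexity of `f`, the linearised decrease
`⟪∇f(x k), y k - x k⟫` is at most `f x* - f (x k)`, while the exact quadratic remainder of a step
of length `γ` is `γ²/2 ⟪A(y - x), y - x⟫ ≤ γ²/2 · M ‖y - x‖₁² ≤ 2γ²MR²`. So the gap
`h k = f (x k) - f x*` satisfies `h (k+1) ≤ (1 - γ_k) h k + 2γ_k² MR²`, and for `γ_k = 2/(k+1)`
induction gives `h N ≤ 8MR²/(N+1)`. -/

open Matrix

section

variable {ι : Type*} [Fintype ι]

noncomputable def quadObjective (A : Matrix ι ι ℝ) (b : ι → ℝ) (x : ι → ℝ) : ℝ :=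
  1 / 2 * (A *ᵥ x ⬝ᵥ x) - b ⬝ᵥ x

variable (ι) in
def fullSimplex (R : ℝ) : Set (ι → ℝ) :=
  {x | (∀ i, 0 ≤ x i) ∧ ∑ i, x i ≤ R}

namespace Matrix

theorem IsSymm.mulVec_dotProduct_comm_s5 {A : Matrix ι ι ℝ} (hA : A.IsSymm) (u v : ι → ℝ) :
    A *ᵥ u ⬝ᵥ v = A *ᵥ v ⬝ᵥ u := by
  have hvA : v ᵥ* A = A *ᵥ v := by simpa only [hA.eq] using vecMul_transpose A v
  rw [dotProduct_comm, dotProduct_mulVec, hvA]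

theorem mulVec_dotProduct_self_le_sum_abs_sq {A : Matrix ι ι ℝ} {M : ℝ}
    (hM : ∀ i j, |A i j| ≤ M) (w : ι → ℝ) : A *ᵥ w ⬝ᵥ w ≤ M * (∑ i, |w i|) ^ 2 := by
  calc A *ᵥ w ⬝ᵥ w = ∑ i, ∑ j, A i j * w j * w i := by
        simp only [dotProduct, mulVec, Finset.sum_mul]
    _ ≤ ∑ i, ∑ j, M * |w j| * |w i| := by
        refine Finset.sum_le_sum fun i _ => Finset.sum_le_sum fun j _ => ?_
        calc A i j * w j * w i ≤ |A i j * w j * w i| := le_abs_self _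
          _ = |A i j| * |w j| * |w i| := by rw [abs_mul, abs_mul]
          _ ≤ M * |w j| * |w i| := by gcongr; exact hM i j
    _ = M * (∑ i, |w i|) ^ 2 := by
        rw [sq, Finset.sum_mul_sum, Finset.mul_sum]
        simp only [Finset.mul_sum]
        exact Finset.sum_congr rfl fun i _ => Finset.sum_congr rfl fun j _ => by ring

end Matrix

theorem quadObjective_eq_add_gradient_add {A : Matrix ι ι ℝ} (hA : A.IsSymm) (b u v : ι → ℝ) :
    quadObjective A b v = quadObjective A b u + (A *ᵥ u - b) ⬝ᵥ (v - u)
      + 1 / 2 * (A *ᵥ (v - u) ⬝ᵥ (v - u)) := by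
  have := hA.mulVec_dotProduct_comm_s5 u v
  simp only [quadObjective, mulVec_sub, sub_dotProduct, dotProduct_sub]
  linarith

theorem quadObjective_add_gradient_le {A : Matrix ι ι ℝ} (hA : A.PosSemidef) (b u v : ι → ℝ) :
    quadObjective A b u + (A *ᵥ u - b) ⬝ᵥ (v - u) ≤ quadObjective A b v := by
  have hQ : 0 ≤ A *ᵥ (v - u) ⬝ᵥ (v - u) := by
    simpa [dotProduct_comm] using hA.dotProduct_mulVec_nonneg (v - u)
  rw [quadObjective_eq_add_gradient_add (isHermitian_iff_isSymm.mp hA.isHermitian) b u v]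
  linarith

theorem frankWolfe_step {A : Matrix ι ι ℝ} (hA : A.PosSemidef) (b : ι → ℝ) {x y z : ι → ℝ}
    (hy : (A *ᵥ x - b) ⬝ᵥ y ≤ (A *ᵥ x - b) ⬝ᵥ z) {γ : ℝ} (hγ : 0 ≤ γ) :
    quadObjective A b ((1 - γ) • x + γ • y) - quadObjective A b z
      ≤ (1 - γ) * (quadObjective A b x - quadObjective A b z)
        + γ ^ 2 / 2 * (A *ᵥ (y - x) ⬝ᵥ (y - x)) := by
  have hmove : (1 - γ) • x + γ • y - x = γ • (y - x) := by module
  have hgap : (A *ᵥ x - b) ⬝ᵥ (y - x) ≤ quadObjective A b z - quadObjective A b x := by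
    have := quadObjective_add_gradient_le hA b x z
    rw [dotProduct_sub] at this ⊢
    linarith
  rw [quadObjective_eq_add_gradient_add (isHermitian_iff_isSymm.mp hA.isHermitian) b x, hmove]
  simp only [mulVec_smul, dotProduct_smul, smul_dotProduct, smul_eq_mul]
  linarith [mul_le_mul_of_nonneg_left hgap hγ]

theorem convex_fullSimplex (R : ℝ) : Convex ℝ (fullSimplex ι R) := by
  rintro u ⟨hu0, huR⟩ v ⟨hv0, hvR⟩ a c ha hc hac
  refine ⟨fun i => ?_, ?_⟩
  · simp only [Pi.add_apply, Pi.smul_apply, smul_eq_mul]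
    exact add_nonneg (mul_nonneg ha (hu0 i)) (mul_nonneg hc (hv0 i))
  · simp only [Pi.add_apply, Pi.smul_apply, smul_eq_mul, Finset.sum_add_distrib, ← Finset.mul_sum]
    calc a * ∑ i, u i + c * ∑ i, v i ≤ a * R + c * R := by gcongr
      _ = R := by rw [← add_mul, hac, one_mul]

theorem sum_abs_sub_le_of_mem_fullSimplex {R : ℝ} {u v : ι → ℝ} (hu : u ∈ fullSimplex ι R)
    (hv : v ∈ fullSimplex ι R) : ∑ i, |v i - u i| ≤ 2 * R := by
  calc ∑ i, |v i - u i| ≤ ∑ i, (v i + u i) :=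
        Finset.sum_le_sum fun i _ =>
          abs_sub_le_iff.mpr ⟨by linarith [hu.1 i], by linarith [hv.1 i]⟩
    _ = ∑ i, v i + ∑ i, u i := Finset.sum_add_distrib
    _ ≤ 2 * R := by linarith [hu.2, hv.2]

theorem mulVec_sub_dotProduct_sub_le_of_mem_fullSimplex {A : Matrix ι ι ℝ} {M R : ℝ}
    (hM : ∀ i j, |A i j| ≤ M) (hM0 : 0 ≤ M) {u v : ι → ℝ} (hu : u ∈ fullSimplex ι R)
    (hv : v ∈ fullSimplex ι R) : A *ᵥ (v - u) ⬝ᵥ (v - u) ≤ 4 * (M * R ^ 2) := by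
  calc A *ᵥ (v - u) ⬝ᵥ (v - u) ≤ M * (∑ i, |v i - u i|) ^ 2 :=
        mulVec_dotProduct_self_le_sum_abs_sq hM _
    _ ≤ M * (2 * R) ^ 2 := by
        gcongr
        exact sum_abs_sub_le_of_mem_fullSimplex hu hv
    _ = 4 * (M * R ^ 2) := by ring

end

theorem le_of_frankWolfe_recurrence {h : ℕ → ℝ} {C : ℝ} (hC : 0 ≤ C)
    (hrec : ∀ k : ℕ, 1 ≤ k →
      h (k + 1) ≤ (1 - 2 / ((k : ℝ) + 1)) * h k + 2 * (2 / ((k : ℝ) + 1)) ^ 2 * C)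
    {N : ℕ} (hN : 2 ≤ N) : h N ≤ 8 * C / ((N : ℝ) + 1) := by
  induction N, hN using Nat.le_induction with
  | base =>
    have h2 := hrec 1 le_rfl
    norm_num at h2 ⊢
    linarith
  | succ k hk ih =>
    have hk2 : (2 : ℝ) ≤ k := by exact_mod_cast hk
    have hγ : 0 ≤ 1 - 2 / ((k : ℝ) + 1) := by
      rw [sub_nonneg, div_le_one (by positivity)]
      linarith
    calc h (k + 1) ≤ (1 - 2 / ((k : ℝ) + 1)) * (8 * C / ((k : ℝ) + 1))
          + 2 * (2 / ((k : ℝ) + 1)) ^ 2 * C := by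
          have := mul_le_mul_of_nonneg_left ih hγ
          linarith [hrec k (by omega)]
      _ = 8 * C * k / ((k : ℝ) + 1) ^ 2 := by
          field_simp
          ring
      _ ≤ 8 * C / ((k + 1 : ℕ) + 1 : ℝ) := by
          push_cast
          -- `k (k + 2) ≤ (k + 1)²`
          rw [div_le_div_iff₀ (by positivity) (by positivity)]
          nlinarith

theorem stmt5_general {n : ℕ} (A : Matrix (Fin n) (Fin n) ℝ) (hA : A.PosSemidef)
    (b : Fin n → ℝ) (f : (Fin n → ℝ) → ℝ)
    (hf : ∀ x, f x = (1 / 2) * (∑ i, A.mulVec x i * x i) - ∑ i, b i * x i)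
    (R : ℝ)
    (S : Set (Fin n → ℝ))
    (hS : S = {x | (∀ i, 0 ≤ x i) ∧ (∑ i, x i) ≤ R})
    (M : ℝ) (hM : IsGreatest {v | ∃ i j, v = |A i j|} M)
    (xstar : Fin n → ℝ) (hxstar : xstar ∈ S)
    (x y : ℕ → Fin n → ℝ) (hx1 : x 1 ∈ S)
    (hy : ∀ k, 1 ≤ k → y k ∈ S ∧ ∀ z ∈ S,
      (∑ i, (A.mulVec (x k) i - b i) * y k i) ≤ ∑ i, (A.mulVec (x k) i - b i) * z i)
    (hupd : ∀ k, 1 ≤ k →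
      x (k + 1) = (1 - 2 / ((k : ℝ) + 1)) • x k + (2 / ((k : ℝ) + 1)) • y k)
    (N : ℕ) (hN : 2 ≤ N) :
    f (x N) - f xstar ≤ 8 * M * R ^ 2 / ((N : ℝ) + 1) := by
  obtain rfl : f = quadObjective A b := funext hf
  obtain rfl : S = fullSimplex (Fin n) R := hS
  have hMA : ∀ i j, |A i j| ≤ M := fun i j => hM.2 ⟨i, j, rfl⟩
  have hM0 : 0 ≤ M := by
    obtain ⟨i, j, rfl⟩ := hM.1
    exact abs_nonneg _
  have hmem : ∀ k, 1 ≤ k → x k ∈ fullSimplex (Fin n) R := by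
    intro k hk
    induction k, hk using Nat.le_induction with
    | base => exact hx1
    | succ k hk ih =>
      have hγ : 2 / ((k : ℝ) + 1) ≤ 1 := by
        rw [div_le_one (by positivity)]
        linarith [(Nat.one_le_cast (α := ℝ)).mpr hk]
      rw [hupd k hk]
      exact convex_fullSimplex R ih (hy k hk).1 (by linarith) (by positivity) (by ring)
  refine (le_of_frankWolfe_recurrence (C := M * R ^ 2)
    (h := fun k => quadObjective A b (x k) - quadObjective A b xstar)
    (by positivity) (fun k hk => ?_) hN).trans_eq (by ring)
  have hstep := frankWolfe_step hA b ((hy k hk).2 xstar hxstar)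
    (γ := 2 / ((k : ℝ) + 1)) (by positivity)
  have hquad := mulVec_sub_dotProduct_sub_le_of_mem_fullSimplex hMA hM0 (hmem k hk) (hy k hk).1
  rw [hupd k hk]
  linarith [mul_le_mul_of_nonneg_left hquad (by positivity : 0 ≤ (2 / ((k : ℝ) + 1)) ^ 2 / 2)]

/-- Frank–Wolfe on the full-dimensional simplex `S̄_n(R) = {x : xᵢ ≥ 0, Σxᵢ ≤ R}` for a
quadratic `f x = (1/2)⟨Ax,x⟩ - ⟨b,x⟩` (`A` symmetric PSD, `n ≥ 2`), with steps
`γ_k = 2/(k+1)`: for every `N ≥ 2`, `f(x^N) - f(x*) ≤ 8 max_{i,j}|A_{ij}| R² / (N+1)`. -/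
theorem stmt5 {n : ℕ} (hn : 2 ≤ n) (A : Matrix (Fin n) (Fin n) ℝ) (hA : A.PosSemidef)
    (b : Fin n → ℝ) (f : (Fin n → ℝ) → ℝ)
    (hf : ∀ x, f x = (1 / 2) * (∑ i, A.mulVec x i * x i) - ∑ i, b i * x i)
    (R : ℝ) (hR : 0 < R)
    (S : Set (Fin n → ℝ))
    (hS : S = {x | (∀ i, 0 ≤ x i) ∧ (∑ i, x i) ≤ R})
    (M : ℝ) (hM : IsGreatest {v | ∃ i j, v = |A i j|} M)
    (xstar : Fin n → ℝ) (hxstar : xstar ∈ S) (hmin : ∀ z ∈ S, f xstar ≤ f z)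
    (x y : ℕ → Fin n → ℝ) (hx1 : x 1 ∈ S)
    (hy : ∀ k, 1 ≤ k → y k ∈ S ∧ ∀ z ∈ S,
      (∑ i, (A.mulVec (x k) i - b i) * y k i) ≤ ∑ i, (A.mulVec (x k) i - b i) * z i)
    (hupd : ∀ k, 1 ≤ k →
      x (k + 1) = (1 - 2 / ((k : ℝ) + 1)) • x k + (2 / ((k : ℝ) + 1)) • y k)
    (N : ℕ) (hN : 2 ≤ N) :
    f (x N) - f xstar ≤ 8 * M * R ^ 2 / ((N : ℝ) + 1) :=
  stmt5_general A hA b f hf R S hS M hM xstar hxstar x y hx1 hy hupd N hN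
end

section
/- Let A be a symmetric positive semidefinite n×n real matrix (n ≥ 1). Then the supremum of ⟨h, Ah⟩ over all h ∈ ℝⁿ with ‖h‖₁ ≤ 1 equals max_{i,j} |A_{ij}|. -/
/-!
Every entry of the quadratic form `hᵀAh` is bounded by `M = max |Aᵢⱼ|`, so on the `ℓ₁`-unit ball
`hᵀAh ≤ M ‖h‖₁² ≤ M`. Conversely, testing positive semidefiniteness on `eᵢ ± eⱼ` gives
`2 |Aᵢⱼ| ≤ Aᵢᵢ + Aⱼⱼ`, so the largest entry in absolute value sits on the diagonal, and the
basis vector `eₖ` at that diagonal position attains `M`.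
-/

open Matrix

variable {ι : Type*} [Fintype ι]

theorem Matrix.dotProduct_mulVec_le_mul_sq_sum_abs (A : Matrix ι ι ℝ) {M : ℝ}
    (hAM : ∀ i j, |A i j| ≤ M) (h : ι → ℝ) :
    h ⬝ᵥ (A *ᵥ h) ≤ M * (∑ i, |h i|) ^ 2 := by
  calc h ⬝ᵥ (A *ᵥ h) = ∑ i, ∑ j, h i * A i j * h j := by
        simp only [dotProduct, mulVec, Finset.mul_sum, mul_assoc]
    _ ≤ ∑ i, ∑ j, |h i| * M * |h j| := by
        refine Finset.sum_le_sum fun i _ => Finset.sum_le_sum fun j _ => ?_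
        calc h i * A i j * h j ≤ |h i * A i j * h j| := le_abs_self _
          _ = |h i| * |A i j| * |h j| := by rw [abs_mul, abs_mul]
          _ ≤ |h i| * M * |h j| := by gcongr; exact hAM i j
    _ = M * (∑ i, |h i|) ^ 2 := by
        rw [sq, Finset.sum_mul_sum, Finset.mul_sum]
        simp only [Finset.mul_sum]
        exact Finset.sum_congr rfl fun i _ => Finset.sum_congr rfl fun j _ => by ring

variable [DecidableEq ι]

theorem Matrix.single_dotProduct_mulVec_single (A : Matrix ι ι ℝ) (k : ι) :
    Pi.single k 1 ⬝ᵥ (A *ᵥ Pi.single k 1) = A k k := by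
  simp

theorem Matrix.PosSemidef.two_mul_abs_le_add_diag {A : Matrix ι ι ℝ} (hA : A.PosSemidef)
    (i j : ι) : 2 * |A i j| ≤ A i i + A j j := by
  have hsymm : A j i = A i j := by simpa using hA.1.apply i j
  have hform (s : ℝ) : 0 ≤ A i i + 2 * s * A i j + s ^ 2 * A j j := by
    have := hA.dotProduct_mulVec_nonneg (Pi.single i 1 + Pi.single j s)
    simp only [star_trivial, mulVec_add, mulVec_single, MulOpposite.op_one, one_smul,
      op_smul_eq_smul, dotProduct_add, add_dotProduct, single_dotProduct, col_apply, one_mul, hsymm,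
      dotProduct_smul, smul_eq_mul] at this
    linarith
  rcases abs_cases (A i j) with ⟨habs, _⟩ | ⟨habs, _⟩ <;> rw [habs] <;>
    linarith [hform 1, hform (-1)]

theorem Matrix.PosSemidef.exists_diag_eq_of_isGreatest_abs {A : Matrix ι ι ℝ}
    (hA : A.PosSemidef) {M : ℝ} (hM : IsGreatest {v | ∃ i j, v = |A i j|} M) :
    ∃ k, A k k = M := by
  obtain ⟨⟨i, j, rfl⟩, hmax⟩ := hM
  have hdiag (k : ι) : A k k ≤ |A i j| := (le_abs_self _).trans (hmax ⟨k, k, rfl⟩)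
  have := hA.two_mul_abs_le_add_diag i j
  rcases le_total (A j j) (A i i) with hji | hij
  · exact ⟨i, le_antisymm (hdiag i) (by linarith)⟩
  · exact ⟨j, le_antisymm (hdiag j) (by linarith)⟩

theorem stmt8_general {n : ℕ} (A : Matrix (Fin n) (Fin n) ℝ) (hA : A.PosSemidef)
    (M : ℝ) (hM : IsGreatest {v | ∃ i j, v = |A i j|} M) :
    IsGreatest
      {v | ∃ h : Fin n → ℝ, (∑ i, |h i|) ≤ 1 ∧ v = ∑ i, h i * A.mulVec h i} M := by
  obtain ⟨k, hk⟩ := hA.exists_diag_eq_of_isGreatest_abs hM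
  have hAM (i j : Fin n) : |A i j| ≤ M := hM.2 ⟨i, j, rfl⟩
  refine ⟨⟨Pi.single k 1, by simp [apply_ite abs, Pi.single_apply],
    (hk ▸ A.single_dotProduct_mulVec_single k).symm⟩, ?_⟩
  rintro v ⟨h, hh, rfl⟩
  have hM0 : 0 ≤ M := (abs_nonneg _).trans (hAM k k)
  have hsq : (∑ i, |h i|) ^ 2 ≤ 1 :=
    pow_le_one₀ (Finset.sum_nonneg fun i _ => abs_nonneg (h i)) hh
  calc h ⬝ᵥ (A *ᵥ h) ≤ M * (∑ i, |h i|) ^ 2 := A.dotProduct_mulVec_le_mul_sq_sum_abs hAM h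
    _ ≤ M := mul_le_of_le_one_right hM0 hsq

/-- For a symmetric PSD matrix `A` (`n ≥ 1`), the supremum of `⟨h, Ah⟩` over the
`ℓ₁`-unit ball equals (and is attained at) `max_{i,j} |A_{ij}|`. -/
theorem stmt8 {n : ℕ} (hn : 1 ≤ n) (A : Matrix (Fin n) (Fin n) ℝ) (hA : A.PosSemidef)
    (M : ℝ) (hM : IsGreatest {v | ∃ i j, v = |A i j|} M) :
    IsGreatest
      {v | ∃ h : Fin n → ℝ, (∑ i, |h i|) ≤ 1 ∧ v = ∑ i, h i * A.mulVec h i} M :=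
  stmt8_general A hA M hM
end
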